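/- arXiv:2105.02981 — 2 statements merged into one kernel-verified Lean document; each statement's English description precedes it below -/
import Mathlib

section
/- The coinvariant group ℓ∞(ℤ,ℤ)_S is divisible: for every class x ∈ ℓ∞(ℤ,ℤ)_S and every positive integer n, there exists y ∈ ℓ∞(ℤ,ℤ)_S with n·y = x. Consequently ℓ∞(ℤ,ℤ)_S admits the structure of a ℚ-vector space. -/
/-- The abelian group `ℓ∞(ℤ,ℤ)` of bounded integer sequences. -/
def linfZ : AddSubgroup (ℤ → ℤ) where
  carrier := {a | ∃ C : ℤ, ∀ i, |a i| ≤ C}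
  zero_mem' := ⟨0, fun i => by simp⟩
  add_mem' := by
    rintro a b ⟨C, hC⟩ ⟨D, hD⟩
    exact ⟨C + D, fun i => (abs_add_le _ _).trans (add_le_add (hC i) (hD i))⟩
  neg_mem' := by
    rintro a ⟨C, hC⟩
    exact ⟨C, fun i => by simpa using hC i⟩

/-- The shift operator `(Sa)_i = a_{i+1}` on `ℓ∞(ℤ,ℤ)`. -/
def shiftS : linfZ →+ linfZ where
  toFun a := ⟨fun i => a.1 (i + 1), by obtain ⟨C, hC⟩ := a.2; exact ⟨C, fun i => hC (i + 1)⟩⟩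
  map_zero' := rfl
  map_add' _ _ := rfl

/-- The subgroup `(1 - S) ℓ∞(ℤ,ℤ) = {a - Sa}`. -/
def coinvSub : AddSubgroup linfZ := (AddMonoidHom.id linfZ - shiftS).range

/-- The coinvariant group `ℓ∞(ℤ,ℤ)_S`. -/
abbrev linfZS := linfZ ⧸ coinvSub

/-
Every integer sequence `a` is a forward difference `Δs` of some, possibly unbounded, sequence `s`,
and `a` vanishes in `ℓ∞(ℤ,ℤ)_S` exactly when it is `Δc` for a bounded `c`. Dividing with remainder,
`s = n ⌊s/n⌋ + r` with `0 ≤ r < n`, so `a - n Δ⌊s/n⌋ = Δr` vanishes in the coinvariants, and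
`Δ⌊s/n⌋` is bounded because `n Δ⌊s/n⌋ = a - Δr` is. Conversely, if `n a = Δc` with `c` bounded,
then `c` is constant modulo `n`, hence `a = Δ⌊c/n⌋` with `⌊c/n⌋` bounded. A divisible torsion-free
group is isomorphic to its divisible hull, which is a `ℚ`-vector space.
-/

open Finset in
theorem fwdDiff_one_surjective (G : Type*) [AddCommGroup G] :
    Function.Surjective (fwdDiff (1 : ℤ) : (ℤ → G) → ℤ → G) := fun f => by
  refine ⟨fun i => ∑ j ∈ Ico 0 i, f j - ∑ j ∈ Ico i 0, f j, funext fun i => ?_⟩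
  rcases le_or_gt 0 i with hi | hi
  · rw [fwdDiff, Ico_eq_empty_of_le (a := i) hi, Ico_eq_empty_of_le (a := i + 1) (by omega),
      ← sum_Ico_add_eq_sum_Ico_add_one hi]
    simp
  · rw [fwdDiff, Ico_eq_empty_of_le (b := i) hi.le, Ico_eq_empty_of_le (b := i + 1) (by omega),
      ← insert_Ico_add_one_left_eq_Ico hi, sum_insert (by simp)]
    simp

theorem fwdDiff_eq_nsmul_fwdDiff_ediv_add_fwdDiff_emod (s : ℤ → ℤ) (n : ℕ) :
    fwdDiff 1 s = n • fwdDiff 1 (fun i => s i / n) + fwdDiff 1 (fun i => s i % n) := by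
  conv_lhs => rw [show s = n • (fun i => s i / n) + fun i => s i % n from
    funext fun i => (Int.mul_ediv_add_emod (s i) n).symm]
  rw [fwdDiff_add, fwdDiff_const_smul]

namespace linfZ

theorem fwdDiff_mem {f : ℤ → ℤ} (hf : f ∈ linfZ) : fwdDiff 1 f ∈ linfZ :=
  sub_mem (shiftS ⟨f, hf⟩).2 hf

theorem emod_mem (s : ℤ → ℤ) {n : ℤ} (hn : n ≠ 0) : (fun i => s i % n) ∈ linfZ :=
  ⟨n.natAbs, fun i => by
    rw [abs_of_nonneg (Int.emod_nonneg _ hn)]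
    exact (Int.emod_lt _ hn).le⟩

theorem ediv_mem {f : ℤ → ℤ} (hf : f ∈ linfZ) (n : ℤ) : (fun i => f i / n) ∈ linfZ := by
  obtain ⟨C, hC⟩ := hf
  exact ⟨C, fun i => (Int.abs_ediv_le_abs _ _).trans (hC i)⟩

theorem of_nsmul_mem {f : ℤ → ℤ} {n : ℕ} (hn : n ≠ 0) (h : n • f ∈ linfZ) : f ∈ linfZ := by
  obtain ⟨C, hC⟩ := h
  refine ⟨C, fun i => le_trans ?_ (hC i)⟩
  rw [Pi.smul_apply, abs_nsmul]
  exact le_self_nsmul (abs_nonneg _) hn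

end linfZ

theorem mem_coinvSub_iff {a : linfZ} : a ∈ coinvSub ↔ ∃ c ∈ linfZ, fwdDiff 1 c = a := by
  constructor
  · rintro ⟨c, rfl⟩
    exact ⟨-c, neg_mem c.2, funext fun i => by simp [fwdDiff, shiftS, neg_add_eq_sub]⟩
  · rintro ⟨c, hc, hca⟩
    refine ⟨-⟨c, hc⟩, Subtype.ext (funext fun i => ?_)⟩
    simp [← hca, fwdDiff, shiftS, neg_add_eq_sub]

namespace linfZS

theorem exists_nsmul_eq (x : linfZS) {n : ℕ} (hn : n ≠ 0) : ∃ y, n • y = x := by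
  obtain ⟨a, rfl⟩ := QuotientAddGroup.mk_surjective x
  obtain ⟨s, hs⟩ := fwdDiff_one_surjective ℤ a
  have hr := linfZ.emod_mem s (Int.natCast_ne_zero.mpr hn)
  have hsplit := fwdDiff_eq_nsmul_fwdDiff_ediv_add_fwdDiff_emod s n
  have hb : fwdDiff 1 (fun i => s i / n) ∈ linfZ := by
    refine linfZ.of_nsmul_mem hn ?_
    rw [eq_sub_of_add_eq hsplit.symm, hs]
    exact sub_mem a.2 (linfZ.fwdDiff_mem hr)
  refine ⟨QuotientAddGroup.mk ⟨_, hb⟩, ?_⟩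
  rw [← QuotientAddGroup.mk_nsmul, eq_comm, QuotientAddGroup.eq_iff_sub_mem, mem_coinvSub_iff]
  refine ⟨_, hr, ?_⟩
  rw [AddSubgroup.coe_sub, AddSubgroup.coe_nsmul, ← hs, hsplit, add_sub_cancel_left]

theorem eq_zero_of_nsmul_eq_zero {x : linfZS} {n : ℕ} (hn : n ≠ 0) (h : n • x = 0) : x = 0 := by
  obtain ⟨a, rfl⟩ := QuotientAddGroup.mk_surjective x
  rw [← QuotientAddGroup.mk_nsmul, QuotientAddGroup.eq_zero_iff, mem_coinvSub_iff] at h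
  obtain ⟨c, hc, hca⟩ := h
  have hr : fwdDiff 1 (fun i => c i % n) = 0 := funext fun i =>
    sub_eq_zero.mpr (Int.modEq_iff_dvd.mpr ⟨a.1 i, by simpa [fwdDiff] using congrFun hca i⟩).symm
  have hsplit := fwdDiff_eq_nsmul_fwdDiff_ediv_add_fwdDiff_emod c n
  rw [hr, add_zero, hca, AddSubgroup.coe_nsmul] at hsplit
  rw [QuotientAddGroup.eq_zero_iff, mem_coinvSub_iff]
  exact ⟨_, linfZ.ediv_mem hc n, nsmul_right_injective hn hsplit.symm⟩

instance : IsAddTorsionFree linfZS where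
  nsmul_right_injective _ hn x y h :=
    sub_eq_zero.mp (eq_zero_of_nsmul_eq_zero hn (by rw [nsmul_sub]; exact sub_eq_zero.mpr h))

end linfZS

noncomputable abbrev moduleRatOfDivisible (M : Type*) [AddCommGroup M] [IsAddTorsionFree M]
    (h : ∀ (x : M) {n : ℕ}, n ≠ 0 → ∃ y, n • y = x) : Module ℚ M :=
  AddEquiv.module ℚ (AddEquiv.ofBijective (DivisibleHull.coeAddMonoidHom M)
    ⟨DivisibleHull.coe_injective, fun x => by
      induction x with
      | mk m s =>
        obtain ⟨y, hy⟩ := h m s.ne_zero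
        exact ⟨y, by simp [DivisibleHull.mk_eq_mk_iff_smul_eq_smul, hy]⟩⟩)

/--  is divisible and admits the structure of a -vector space. -/
theorem linfZS_divisible_and_Q_vector_space :
    (∀ (x : linfZS) (n : ℕ), 0 < n → ∃ y : linfZS, n • y = x) ∧
    (∀ (x : linfZS) (n : ℕ), 0 < n → n • x = 0 → x = 0) ∧
    Nonempty (Module ℚ linfZS) :=
  ⟨fun x _ hn => linfZS.exists_nsmul_eq x hn.ne',
    fun _ _ hn => linfZS.eq_zero_of_nsmul_eq_zero hn.ne',
    ⟨moduleRatOfDivisible linfZS fun x _ hn => linfZS.exists_nsmul_eq x hn⟩⟩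
end

section
/- Let U be a 2×2 unitary Hermitian matrix and suppose α₀ is a smooth ℂ²-valued function with H α₀ = α₀, where H = −d²/dx² + x². Define α_k = A_U* α_{k−1} with A_U* = −d/dx + Ux. Then H α_k = (2kU + I) α_k for all k ≥ 0. -/
open Matrix

/-- The creation operator `A_U* = −d/dx + Ux` on smooth `ℂ²`-valued functions. -/
noncomputable def creOpU (U : Matrix (Fin 2) (Fin 2) ℂ) (f : ℝ → Fin 2 → ℂ) : ℝ → Fin 2 → ℂ :=
  fun x => -deriv f x + x • U.mulVec (f x)

/-- The 2-dimensional harmonic oscillator `H = −d²/dx² + x²`. -/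
noncomputable def hamOp2 (f : ℝ → Fin 2 → ℂ) : ℝ → Fin 2 → ℂ :=
  fun x => -deriv (deriv f) x + (x ^ 2) • f x

lemma real_smul_pi2 (r : ℝ) (v : Fin 2 → ℂ) : r • v = (r : ℂ) • v := by
  funext i
  simp [Complex.real_smul]

lemma mulVec_hasDerivAt (U : Matrix (Fin 2) (Fin 2) ℂ) {f : ℝ → Fin 2 → ℂ}
    {f' : Fin 2 → ℂ} {x : ℝ} (hf : HasDerivAt f f' x) :
    HasDerivAt (fun y => U.mulVec (f y)) (U.mulVec f') x := by
  rw [hasDerivAt_pi] at hf ⊢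
  intro i
  simp only [Matrix.mulVec, dotProduct]
  exact HasDerivAt.fun_sum fun j _ => (hf j).const_mul _

lemma mulVec_contDiff (U : Matrix (Fin 2) (Fin 2) ℂ) {f : ℝ → Fin 2 → ℂ}
    (hf : ContDiff ℝ (⊤ : ℕ∞) f) : ContDiff ℝ (⊤ : ℕ∞) (fun y => U.mulVec (f y)) := by
  rw [contDiff_pi]
  intro i
  simp only [Matrix.mulVec, dotProduct]
  exact ContDiff.sum fun j _ => ContDiff.mul contDiff_const ((contDiff_pi.mp hf) j)

lemma creOpU_contDiff (U : Matrix (Fin 2) (Fin 2) ℂ) {f : ℝ → Fin 2 → ℂ}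
    (hf : ContDiff ℝ (⊤ : ℕ∞) f) : ContDiff ℝ (⊤ : ℕ∞) (creOpU U f) := by
  have hd : ContDiff ℝ (⊤ : ℕ∞) (deriv f) := (contDiff_infty_iff_deriv.mp hf).2
  exact hd.neg.add (contDiff_id.smul (mulVec_contDiff U hf))

lemma deriv_creOpU (U : Matrix (Fin 2) (Fin 2) ℂ) {f : ℝ → Fin 2 → ℂ}
    (hf : ContDiff ℝ (⊤ : ℕ∞) f) :
    deriv (creOpU U f) = fun x =>
      -deriv (deriv f) x + (x • U.mulVec (deriv f x) + (1 : ℝ) • U.mulVec (f x)) := by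
  funext x
  have hfd : HasDerivAt f (deriv f x) x :=
    ((hf.differentiable (by simp)) x).hasDerivAt
  have hd1 : ContDiff ℝ (⊤ : ℕ∞) (deriv f) := (contDiff_infty_iff_deriv.mp hf).2
  have hfd2 : HasDerivAt (deriv f) (deriv (deriv f) x) x :=
    ((hd1.differentiable (by simp)) x).hasDerivAt
  have h1 : HasDerivAt (fun y => y • U.mulVec (f y))
      (x • U.mulVec (deriv f x) + (1 : ℝ) • U.mulVec (f x)) x :=
    (hasDerivAt_id x).smul (mulVec_hasDerivAt U hfd)
  exact (hfd2.neg.add h1).deriv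

/-- If `U` is 2×2 unitary Hermitian, `H α₀ = α₀` and `α_{k} = A_U* α_{k−1}`, then
`H α_k = (2kU + I) α_k` for all `k ≥ 0`. -/
theorem harmonic_oscillator_creation_2dim (U : Matrix (Fin 2) (Fin 2) ℂ)
    (hU : U ∈ Matrix.unitaryGroup (Fin 2) ℂ) (hH : U.IsHermitian)
    (α : ℕ → ℝ → Fin 2 → ℂ) (hsmooth : ContDiff ℝ (⊤ : ℕ∞) (α 0))
    (hground : hamOp2 (α 0) = α 0)
    (hrec : ∀ k : ℕ, α (k + 1) = creOpU U (α k)) :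
    ∀ k : ℕ, hamOp2 (α k) = fun x => ((2 * k : ℕ) : ℂ) • U.mulVec (α k x) + α k x := by
  have hU2 : U * U = 1 := by
    have h := hU.2
    rwa [Matrix.star_eq_conjTranspose, hH.eq] at h
  have hUU : ∀ v : Fin 2 → ℂ, U.mulVec (U.mulVec v) = v := by
    intro v
    rw [Matrix.mulVec_mulVec, hU2, Matrix.one_mulVec]
  suffices H : ∀ k : ℕ, ContDiff ℝ (⊤ : ℕ∞) (α k) ∧
      hamOp2 (α k) = fun x => ((2 * k : ℕ) : ℂ) • U.mulVec (α k x) + α k x from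
    fun k => (H k).2
  intro k
  induction k with
  | zero =>
    refine ⟨hsmooth.of_le (by simp), ?_⟩
    rw [hground]
    funext x
    simp
  | succ k ih =>
    obtain ⟨hsm, hk⟩ := ih
    have hsm' : ContDiff ℝ (⊤ : ℕ∞) (α (k + 1)) := by
      rw [hrec]; exact creOpU_contDiff U hsm
    refine ⟨hsm', ?_⟩
    set f := α k with hf
    have hd1 : ContDiff ℝ (⊤ : ℕ∞) (deriv f) := (contDiff_infty_iff_deriv.mp hsm).2
    have hfd : ∀ x, HasDerivAt f (deriv f x) x :=
      fun x => ((hsm.differentiable (by simp)) x).hasDerivAt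
    have hfd2 : ∀ x, HasDerivAt (deriv f) (deriv (deriv f) x) x :=
      fun x => ((hd1.differentiable (by simp)) x).hasDerivAt
    -- second derivative of f from the induction hypothesis
    have h2 : deriv (deriv f) = fun x =>
        (x ^ 2 : ℝ) • f x - (((2 * k : ℕ) : ℂ) • U.mulVec (f x) + f x) := by
      funext x
      have := congrFun hk x
      simp only [hamOp2] at this
      have : -deriv (deriv f) x + (x ^ 2 : ℝ) • f x
          = ((2 * k : ℕ) : ℂ) • U.mulVec (f x) + f x := this
      linear_combination (norm := module) -this
    -- third derivative of f
    have h3 : ∀ x, HasDerivAt (deriv (deriv f))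
        ((x ^ 2 : ℝ) • deriv f x + ((2 : ℝ) * x ^ 1) • f x
          - (((2 * k : ℕ) : ℂ) • U.mulVec (deriv f x) + deriv f x)) x := by
      intro x
      rw [h2]
      exact (((hasDerivAt_pow 2 x).smul (hfd x)).sub
        (((mulVec_hasDerivAt U (hfd x)).fun_const_smul _).add (hfd x)))
    -- first derivative of α (k+1)
    have hder1 : deriv (α (k + 1)) = fun x =>
        -deriv (deriv f) x + (x • U.mulVec (deriv f x) + (1 : ℝ) • U.mulVec (f x)) := by
      rw [hrec]; exact deriv_creOpU U hsm
    -- second derivative of α (k+1)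
    have hder2 : ∀ x, deriv (deriv (α (k + 1))) x =
        -((x ^ 2 : ℝ) • deriv f x + ((2 : ℝ) * x ^ 1) • f x
          - (((2 * k : ℕ) : ℂ) • U.mulVec (deriv f x) + deriv f x))
        + ((x • U.mulVec (deriv (deriv f) x) + (1 : ℝ) • U.mulVec (deriv f x))
            + (1 : ℝ) • U.mulVec (deriv f x)) := by
      intro x
      rw [hder1]
      have hA : HasDerivAt (fun y => y • U.mulVec (deriv f y))
          (x • U.mulVec (deriv (deriv f) x) + (1 : ℝ) • U.mulVec (deriv f x)) x :=
        (hasDerivAt_id x).smul (mulVec_hasDerivAt U (hfd2 x))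
      have hB : HasDerivAt (fun y => (1 : ℝ) • U.mulVec (f y))
          ((1 : ℝ) • U.mulVec (deriv f x)) x :=
        (mulVec_hasDerivAt U (hfd x)).fun_const_smul _
      exact ((h3 x).neg.add (hA.add hB)).deriv
    -- assemble
    funext x
    simp only [hamOp2]
    rw [hder2 x, hrec k]
    simp only [creOpU]
    rw [h2]
    simp only [real_smul_pi2, Matrix.mulVec_add, Matrix.mulVec_smul, hUU,
      Matrix.mulVec_neg, Matrix.mulVec_sub]
    push_cast
    module
end
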